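/- arXiv:2605.23773 — 7 statements merged into one kernel-verified Lean document; each statement's English description precedes it below -/
import Mathlib

section
/- For every positive integer r, the product ∏_{j=1}^{r-1} λ_j(r) equals r, where the product is interpreted as the empty product (equal to 1) when r = 1. -/
open Real Finset

/-- `pathEig r j = λ_j(r) = 2 - 2 cos (π j / r)`. -/
noncomputable def pathEig (r j : ℕ) : ℝ := 2 - 2 * Real.cos (π * j / r)

set_option maxHeartbeats 1000000 in
theorem prod_pathEig (r : ℕ) (hr : 0 < r) :
    ∏ j ∈ Finset.Icc 1 (r - 1), pathEig r j = (r : ℝ) := by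
  rcases Nat.eq_or_lt_of_le hr with h1 | hr1
  · simp [← h1]
  -- now r ≥ 2, in particular r - 1 ≥ 1
  set μ : ℂ := Complex.exp (2 * π * Complex.I / ((2 * r : ℕ) : ℂ)) with hμdef
  have hprim : IsPrimitiveRoot μ (2 * r) :=
    Complex.isPrimitiveRoot_exp (2 * r) (by omega)
  have hμpow : ∀ j : ℕ, μ ^ j = Complex.exp (π * j / r * Complex.I) := by
    intro j
    rw [hμdef, ← Complex.exp_nat_mul]
    congr 1
    have hrne : (r : ℂ) ≠ 0 := Nat.cast_ne_zero.mpr hr.ne'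
    push_cast
    field_simp
  -- grand product over j = 1 .. 2r-1
  have hgrand : ∏ k ∈ range (2 * r - 1), (1 - μ ^ (k + 1)) = (2 * r : ℂ) := by
    have h2r : 2 * r - 1 + 1 = 2 * r := by omega
    have hprim' : IsPrimitiveRoot μ ((2 * r - 1) + 1) := by rwa [h2r]
    rw [hprim'.prod_one_sub_pow_eq_order]
    push_cast [Nat.cast_sub (by omega : 1 ≤ 2 * r)]
    ring
  -- reindex the grand product over Ioc 0 (2r-1)
  have hgrand' : ∏ j ∈ Ioc 0 (2 * r - 1), (1 - μ ^ j) = (2 * r : ℂ) := by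
    rw [← hgrand]
    exact Finset.prod_nbij' (fun j => j - 1) (fun k => k + 1)
      (by intro j hj; simp at hj ⊢; omega)
      (by intro k hk; simp at hk ⊢; omega)
      (by intro j hj; simp at hj; omega)
      (by intro k _; omega)
      (by intro j hj; simp at hj; rw [show j - 1 + 1 = j by omega])
  -- split product: Ioc 0 (2r-1) = Ioc 0 (r-1) ∪ Ioc (r-1) r ∪ Ioc r (2r-1)
  have hsplit : (∏ j ∈ Ioc 0 (r - 1), (1 - μ ^ j)) * (1 - μ ^ r) *
      ∏ j ∈ Ioc r (2 * r - 1), (1 - μ ^ j) = (2 * r : ℂ) := by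
    rw [← hgrand', ← Finset.prod_Ioc_consecutive _ (by omega : 0 ≤ r - 1)
      (by omega : r - 1 ≤ 2 * r - 1), ← Finset.prod_Ioc_consecutive _
      (by omega : r - 1 ≤ r) (by omega : r ≤ 2 * r - 1)]
    have : Ioc (r - 1) r = {r} := by
      ext x; simp; omega
    rw [this, Finset.prod_singleton, mul_assoc]
  -- reflect the upper product
  have hrefl : ∏ j ∈ Ioc r (2 * r - 1), (1 - μ ^ j)
      = ∏ j ∈ Ioc 0 (r - 1), (1 - μ ^ (2 * r - j)) := by
    exact Finset.prod_nbij' (fun j => 2 * r - j) (fun j => 2 * r - j)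
      (by intro j hj; simp at hj ⊢; omega)
      (by intro j hj; simp at hj ⊢; omega)
      (by intro j hj; simp at hj; omega)
      (by intro j hj; simp at hj; omega)
      (by intro j hj; simp at hj; rw [show 2 * r - (2 * r - j) = j by omega])
  -- the middle factor is 2
  have hmid : (1 : ℂ) - μ ^ r = 2 := by
    rw [hμpow]
    have : (π : ℂ) * r / r * Complex.I = π * Complex.I := by
      have hrne : (r : ℂ) ≠ 0 := Nat.cast_ne_zero.mpr hr.ne'
      field_simp
    rw [this, Complex.exp_pi_mul_I]
    ring
  -- pairing: each pair gives pathEig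
  have hpair : ∀ j ∈ Ioc 0 (r - 1),
      (1 - μ ^ j) * (1 - μ ^ (2 * r - j)) = ((pathEig r j : ℝ) : ℂ) := by
    intro j hj
    simp only [Finset.mem_Ioc] at hj
    have hinv : μ ^ (2 * r - j) = Complex.exp (-(π * j / r * Complex.I)) := by
      have h1 : μ ^ (2 * r - j) * μ ^ j = 1 := by
        rw [← pow_add]
        have : 2 * r - j + j = 2 * r := by omega
        rw [this, hprim.pow_eq_one]
      have h2 : μ ^ (2 * r - j) = (μ ^ j)⁻¹ := eq_inv_of_mul_eq_one_left h1
      rw [h2, hμpow, ← Complex.exp_neg]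
    have hcos : μ ^ j + μ ^ (2 * r - j) = 2 * Complex.cos (π * j / r) := by
      rw [hμpow, hinv, Complex.cos]
      ring
    have hconst : μ ^ (2 * r - j) * μ ^ j = 1 := by
      rw [← pow_add]
      have : 2 * r - j + j = 2 * r := by omega
      rw [this, hprim.pow_eq_one]
    have : (1 - μ ^ j) * (1 - μ ^ (2 * r - j))
        = 2 - (μ ^ j + μ ^ (2 * r - j)) := by
      linear_combination hconst
    rw [this, hcos, pathEig]
    push_cast
    ring
  -- combine
  have key : (∏ j ∈ Ioc 0 (r - 1), ((pathEig r j : ℝ) : ℂ)) * 2 = (2 * r : ℂ) := by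
    calc (∏ j ∈ Ioc 0 (r - 1), ((pathEig r j : ℝ) : ℂ)) * 2
        = (∏ j ∈ Ioc 0 (r - 1), (1 - μ ^ j) * (1 - μ ^ (2 * r - j))) * 2 := by
          rw [Finset.prod_congr rfl hpair]
      _ = (∏ j ∈ Ioc 0 (r - 1), (1 - μ ^ j)) * (1 - μ ^ r) *
          ∏ j ∈ Ioc r (2 * r - 1), (1 - μ ^ j) := by
          rw [hrefl, hmid, Finset.prod_mul_distrib]; ring
      _ = (2 * r : ℂ) := hsplit
  have key2 : (∏ j ∈ Ioc 0 (r - 1), ((pathEig r j : ℝ) : ℂ)) = (r : ℂ) := by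
    rw [show (2 * (r : ℂ)) = (r : ℂ) * 2 by ring] at key
    exact mul_right_cancel₀ two_ne_zero key
  have : Finset.Icc 1 (r - 1) = Finset.Ioc 0 (r - 1) := by
    ext x; simp; omega
  rw [this]
  have := key2
  rw [← Complex.ofReal_prod] at this
  exact_mod_cast this
end

section
/- Let r be a positive integer and let θ > 0 be real. If x = 2·cosh(θ) − 2, then q_r(x) = sinh(r·θ)/sinh(θ), where q_r(x) = ∏_{j=1}^{r-1} (x + λ_j(r)) (interpreted as the empty product when r = 1). -/
/-!
Since `x + λ_j(r) = 2 (cosh θ - cos (π j / r))`, the product `q_r(2 cosh θ - 2)` is the Chebyshev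
polynomial `U_{r-1}` of the second kind, evaluated at `cosh θ` and written out over its roots
`cos (π j / r)` with leading coefficient `2^(r-1)`. The identity `U_{r-1}(cosh θ) sinh θ = sinh (r θ)`
finishes the proof.
-/

open Real Finset

/-- `qPoly r x = ∏_{j=1}^{r-1} (x + λ_j(r))` (the empty product when `r = 1`). -/
noncomputable def qPoly (r : ℕ) (x : ℝ) : ℝ :=
  ∏ j ∈ Finset.Icc 1 (r - 1), (x + pathEig r j)

open Polynomial Polynomial.Chebyshev

theorem Polynomial.Chebyshev.U_real_eq_prod (n : ℕ) :
    U ℝ n = ∏ k ∈ range n, Polynomial.C 2 * (X - Polynomial.C (cos ((k + 1) * π / (n + 1)))) := by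
  have hinj : Set.InjOn (fun k : ℕ ↦ cos ((k + 1) * π / (n + 1))) (range n) :=
    (range n).nodup_map_iff_injOn.mp (roots_U_real_nodup n)
  have hsplit : Multiset.card (U ℝ n).roots = (U ℝ n).natDegree := by
    rw [roots_U_real, card_val, card_image_of_injOn hinj, card_range, natDegree_U_natCast]
  conv_lhs => rw [← C_leadingCoeff_mul_prod_multiset_X_sub_C hsplit]
  rw [leadingCoeff_U_natCast, roots_U_real, ← prod_eq_multiset_prod, prod_image hinj,
    prod_mul_distrib, prod_const, card_range, Polynomial.C_pow]

theorem Polynomial.Chebyshev.eval_U_real_eq_prod (n : ℕ) (y : ℝ) :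
    (U ℝ n).eval y = ∏ k ∈ range n, 2 * (y - cos ((k + 1) * π / (n + 1))) := by
  simp only [U_real_eq_prod, eval_prod, eval_mul, eval_C, eval_sub, eval_X]

theorem qPoly_succ_two_mul_sub_two (n : ℕ) (y : ℝ) :
    qPoly (n + 1) (2 * y - 2) = (U ℝ n).eval y := by
  rw [eval_U_real_eq_prod, qPoly, Nat.add_sub_cancel, ← Ico_add_one_right_eq_Icc,
    prod_Ico_eq_prod_range, Nat.add_sub_cancel]
  refine prod_congr rfl fun k _ ↦ ?_
  rw [pathEig]
  push_cast
  ring_nf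

theorem qPoly_hyperbolic (r : ℕ) (hr : 0 < r) (θ x : ℝ) (hθ : 0 < θ)
    (hx : x = 2 * Real.cosh θ - 2) :
    qPoly r x = Real.sinh (r * θ) / Real.sinh θ := by
  obtain ⟨n, rfl⟩ := Nat.exists_eq_add_one.mpr hr
  have hsinh : sinh θ ≠ 0 := (sinh_pos_iff.mpr hθ).ne'
  rw [hx, qPoly_succ_two_mul_sub_two, eq_div_iff hsinh]
  exact_mod_cast U_real_cosh θ n
end

section
/- Let f : [0,1] → ℝ be twice continuously differentiable with f(0) = 0, f'(x) ≥ 0 for all x ∈ [0,1], and f''(x) ≤ 0 for all x ∈ [0,1]. For a positive integer r, set A_r(f) = (1/r)·∑_{j=1}^{r-1} f(j/r). Then A_r(f) ≤ A_{r+1}(f) for every r ≥ 1; consequently, if r ≤ s are positive integers, then (1/r)·∑_{j=1}^{r-1} f(j/r) ≤ (1/s)·∑_{j=1}^{s-1} f(j/s). -/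
/-!
Each point `(i + 1) / (n + 1)` of the finer grid is the convex combination
`((i + 1) • (i / n) + (n - i) • ((i + 1) / n)) / (n + 1)` of two neighbouring points of the coarser
grid. Summing the resulting concavity inequalities over `i < n`, with `S n = ∑_{0<j<n} f (j / n)`,
gives `(n + 1) S (n + 1) ≥ f 0 + f 1 + (n + 2) S n`. Since `f` is monotone with `f 0 ≥ 0`,
`S n ≤ (n - 1) f 1 ≤ n (f 0 + f 1)`, and this is exactly what `S n / n ≤ S (n + 1) / (n + 1)` needs.
-/

open Real Finset Set

theorem DifferentiableOn.hasDerivWithinAt_interior {g : ℝ → ℝ} {D : Set ℝ}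
    (hg : DifferentiableOn ℝ g D) {x : ℝ} (hx : x ∈ interior D) :
    HasDerivWithinAt g (derivWithin g D x) (interior D) x :=
  (hg x (interior_subset hx)).hasDerivWithinAt.mono interior_subset

theorem ContDiffOn.monotoneOn_of_derivWithin_nonneg {f : ℝ → ℝ} {D : Set ℝ} (hD : Convex ℝ D)
    (hf : ContDiffOn ℝ 1 f D) (hf' : ∀ x ∈ interior D, 0 ≤ derivWithin f D x) :
    MonotoneOn f D :=
  monotoneOn_of_hasDerivWithinAt_nonneg hD hf.continuousOn
    (fun _ hx ↦ (hf.differentiableOn one_ne_zero).hasDerivWithinAt_interior hx) hf'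

theorem ContDiffOn.concaveOn_of_derivWithin2_nonpos {f : ℝ → ℝ} {D : Set ℝ} (hD : Convex ℝ D)
    (hDu : UniqueDiffOn ℝ D) (hf : ContDiffOn ℝ 2 f D)
    (hf'' : ∀ x ∈ interior D, derivWithin (derivWithin f D) D x ≤ 0) :
    ConcaveOn ℝ D f :=
  concaveOn_of_hasDerivWithinAt2_nonpos hD hf.continuousOn
    (fun _ hx ↦ (hf.differentiableOn two_ne_zero).hasDerivWithinAt_interior hx)
    (fun _ hx ↦ ((hf.derivWithin hDu one_add_one_eq_two.le).differentiableOn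
      one_ne_zero).hasDerivWithinAt_interior hx) hf''

theorem div_mem_Icc_zero_one {α : Type*} [Field α] [LinearOrder α] [IsStrictOrderedRing α]
    {k n : α} (hk : 0 ≤ k) (hkn : k ≤ n) : k / n ∈ Icc (0 : α) 1 :=
  ⟨div_nonneg hk (hk.trans hkn), div_le_one_of_le₀ hkn (hk.trans hkn)⟩

theorem ConcaveOn.interpolate_grid_le {f : ℝ → ℝ} (hf : ConcaveOn ℝ (Icc 0 1) f) {i n : ℕ}
    (hi : i < n) :
    ((i : ℝ) + 1) * f (i / n) + ((n : ℝ) - i) * f ((i + 1) / n)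
      ≤ ((n : ℝ) + 1) * f ((i + 1) / ((n : ℝ) + 1)) := by
  have hi' : (i : ℝ) + 1 ≤ n := by exact_mod_cast hi
  have hn : (0 : ℝ) < n := by linarith [(i.cast_nonneg : (0 : ℝ) ≤ i)]
  have ha : (0 : ℝ) ≤ (i + 1) / (n + 1) := by positivity
  have hb : (0 : ℝ) ≤ (n - i) / (n + 1) := div_nonneg (by linarith) (by positivity)
  have hpt : (i + 1) / ((n : ℝ) + 1) * (i / n) + (n - i) / ((n : ℝ) + 1) * ((i + 1) / n)
      = (i + 1) / ((n : ℝ) + 1) := by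
    field_simp; ring
  have h := hf.2 (div_mem_Icc_zero_one i.cast_nonneg (by linarith : (i : ℝ) ≤ n))
    (div_mem_Icc_zero_one (by positivity) hi') ha hb (by field_simp; ring)
  simp only [smul_eq_mul, hpt] at h
  rw [div_mul_eq_mul_div, div_mul_eq_mul_div, ← add_div, div_le_iff₀ (by positivity)] at h
  linarith

theorem sum_range_grid_weights (a : ℕ → ℝ) (m : ℕ) :
    ∑ i ∈ range (m + 1), (((i : ℝ) + 1) * a i + (((m + 1 : ℕ) : ℝ) - i) * a (i + 1))
      = a 0 + a (m + 1) + ((m : ℝ) + 3) * ∑ k ∈ range m, a (k + 1) := by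
  rw [sum_add_distrib, sum_range_succ', sum_range_succ, mul_sum, add_add_add_comm,
    ← sum_add_distrib]
  push_cast
  rw [sum_congr rfl fun (i : ℕ) _ ↦
    (by ring : ((i + 1 : ℝ) + 1) * a (i + 1) + (m + 1 - i) * a (i + 1) = (m + 3) * a (i + 1))]
  ring

noncomputable def gridAverage (f : ℝ → ℝ) (n : ℕ) : ℝ :=
  (1 / (n : ℝ)) * ∑ j ∈ Finset.Icc 1 (n - 1), f (j / n)

theorem gridAverage_succ (f : ℝ → ℝ) (m : ℕ) :
    gridAverage f (m + 1)
      = (1 / ((m + 1 : ℕ) : ℝ)) * ∑ k ∈ range m, f ((k + 1) / (m + 1 : ℕ)) := by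
  rw [gridAverage, Nat.add_sub_cancel, ← Finset.Ico_add_one_right_eq_Icc, sum_Ico_eq_sum_range,
    Nat.add_sub_cancel]
  simp only [add_comm 1, Nat.cast_add, Nat.cast_one]

theorem gridAverage_le_succ {f : ℝ → ℝ} (hmono : MonotoneOn f (Icc 0 1))
    (hconc : ConcaveOn ℝ (Icc 0 1) f) (hf0 : 0 ≤ f 0) (n : ℕ) :
    gridAverage f n ≤ gridAverage f (n + 1) := by
  rcases n with _ | m
  · simp [gridAverage]
  set a : ℕ → ℝ := fun k ↦ f (k / (m + 1 : ℕ))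
  have ha_mono : ∀ k ≤ m + 1, a k ≤ a (m + 1) := fun k hk ↦
    hmono (div_mem_Icc_zero_one k.cast_nonneg (by exact_mod_cast hk))
      (div_mem_Icc_zero_one (m + 1).cast_nonneg le_rfl)
      (div_le_div_of_nonneg_right (by exact_mod_cast hk) (m + 1).cast_nonneg)
  have ha0 : 0 ≤ a 0 := by simpa [a] using hf0
  have hT : ∑ k ∈ range m, a (k + 1) ≤ m * a (m + 1) := by
    simpa using sum_le_card_nsmul (range m) (fun k ↦ a (k + 1)) (a (m + 1))
      fun k hk ↦ ha_mono (k + 1) (by simp at hk; omega)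
  have hconc_sum : a 0 + a (m + 1) + ((m : ℝ) + 3) * ∑ k ∈ range m, a (k + 1)
      ≤ ((m + 1 : ℕ) + 1 : ℝ) * ∑ k ∈ range (m + 1), f ((k + 1) / ((m + 1 : ℕ) + 1 : ℝ)) := by
    rw [← sum_range_grid_weights, mul_sum]
    refine sum_le_sum fun i hi ↦ ?_
    simpa [a] using hconc.interpolate_grid_le (mem_range.1 hi)
  have hT_eq : ∑ k ∈ range m, f ((k + 1) / (m + 1 : ℕ)) = ∑ k ∈ range m, a (k + 1) := by
    simp [a]
  rw [gridAverage_succ, gridAverage_succ, hT_eq]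
  push_cast at hconc_sum hT ⊢
  rw [one_div_mul_eq_div, one_div_mul_eq_div, div_le_div_iff₀ (by positivity) (by positivity)]
  have hT_le : ∑ k ∈ range m, a (k + 1) ≤ ((m : ℝ) + 1) * (a 0 + a (m + 1)) := by
    nlinarith [ha_mono 0 (Nat.zero_le _)]
  nlinarith

theorem riemann_sum_monotone (f : ℝ → ℝ)
    (hf : ContDiffOn ℝ 2 f (Set.Icc 0 1))
    (hf0 : f 0 = 0)
    (hf' : ∀ x ∈ Set.Icc (0 : ℝ) 1, 0 ≤ derivWithin f (Set.Icc 0 1) x)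
    (hf'' : ∀ x ∈ Set.Icc (0 : ℝ) 1,
      derivWithin (derivWithin f (Set.Icc 0 1)) (Set.Icc 0 1) x ≤ 0) :
    (∀ r : ℕ, 1 ≤ r →
      (1 / (r : ℝ)) * ∑ j ∈ Finset.Icc 1 (r - 1), f (j / r)
        ≤ (1 / ((r : ℝ) + 1)) * ∑ j ∈ Finset.Icc 1 r, f (j / ((r : ℝ) + 1))) ∧
    (∀ r s : ℕ, 1 ≤ r → r ≤ s →
      (1 / (r : ℝ)) * ∑ j ∈ Finset.Icc 1 (r - 1), f (j / r)
        ≤ (1 / (s : ℝ)) * ∑ j ∈ Finset.Icc 1 (s - 1), f (j / s)) := by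
  have hmono : MonotoneOn f (Icc 0 1) :=
    (hf.of_le one_le_two).monotoneOn_of_derivWithin_nonneg (convex_Icc 0 1)
      fun x hx ↦ hf' x (interior_subset hx)
  have hconc : ConcaveOn ℝ (Icc 0 1) f :=
    hf.concaveOn_of_derivWithin2_nonpos (convex_Icc 0 1) uniqueDiffOn_Icc_zero_one
      fun x hx ↦ hf'' x (interior_subset hx)
  have step : ∀ n, gridAverage f n ≤ gridAverage f (n + 1) :=
    gridAverage_le_succ hmono hconc hf0.ge
  exact ⟨fun r _ ↦ by simpa [gridAverage] using step r,
    fun r s _ hrs ↦ monotone_nat_of_le_succ step hrs⟩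
end

section
/- Fix a real number u ∈ [0,1] and for a positive integer r set B_r(u) = (1/r)·∑_{j=1}^{r-1} min(j/r, u). Then B_r(u) ≤ B_{r+1}(u) for every positive integer r. -/
open Real Finset

private lemma gauss_real (m : ℕ) : ∑ j ∈ Finset.Icc 1 m, (j : ℝ) = (m : ℝ) * ((m : ℝ) + 1) / 2 := by
  induction m with
  | zero => simp
  | succ k ih =>
    rw [Finset.sum_Icc_succ_top (by omega), ih]
    push_cast
    ring

private lemma cap_facts (x : ℝ) (hx0 : 0 ≤ x) (c : ℕ) (hxc : x ≤ (c : ℝ) + 1) :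
    ((min ⌊x⌋.toNat c : ℕ) : ℝ) ≤ x ∧ x ≤ ((min ⌊x⌋.toNat c : ℕ) : ℝ) + 1 := by
  have hfl : (0 : ℤ) ≤ ⌊x⌋ := Int.floor_nonneg.mpr hx0
  have h1 : ((⌊x⌋.toNat : ℕ) : ℝ) = ((⌊x⌋ : ℤ) : ℝ) := by
    have : (⌊x⌋.toNat : ℤ) = ⌊x⌋ := Int.toNat_of_nonneg hfl
    exact_mod_cast this
  constructor
  · rcases le_total (⌊x⌋.toNat) c with h | h
    · rw [min_eq_left h, h1]; exact Int.floor_le x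
    · rw [min_eq_right h]
      have hcc : ((c : ℕ) : ℝ) ≤ ((⌊x⌋.toNat : ℕ) : ℝ) := by exact_mod_cast h
      calc ((c : ℕ) : ℝ) ≤ ((⌊x⌋.toNat : ℕ) : ℝ) := hcc
        _ = ((⌊x⌋ : ℤ) : ℝ) := h1
        _ ≤ x := Int.floor_le x
  · rcases le_total (⌊x⌋.toNat) c with h | h
    · rw [min_eq_left h, h1]; exact (Int.lt_floor_add_one x).le
    · rw [min_eq_right h]; exact hxc

private lemma sum_min_formula (u : ℝ) (s m : ℕ) (hms : m ≤ s)
    (hmu : (m : ℝ) ≤ ((s : ℝ) + 1) * u) (hum : ((s : ℝ) + 1) * u ≤ (m : ℝ) + 1) :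
    ∑ j ∈ Finset.Icc 1 s, min ((j : ℝ) / ((s : ℝ) + 1)) u
      = (m : ℝ) * ((m : ℝ) + 1) / (2 * ((s : ℝ) + 1)) + ((s : ℝ) - (m : ℝ)) * u := by
  have hs1 : (0 : ℝ) < (s : ℝ) + 1 := by positivity
  rw [show Finset.Icc 1 s = Finset.Ioc 0 s from Finset.Icc_add_one_left_eq_Ioc 0 s]
  rw [← Finset.sum_Ioc_consecutive _ (Nat.zero_le m) hms]
  have hA : ∑ j ∈ Finset.Ioc 0 m, min ((j : ℝ) / ((s : ℝ) + 1)) u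
      = (m : ℝ) * ((m : ℝ) + 1) / (2 * ((s : ℝ) + 1)) := by
    have hcong : ∀ j ∈ Finset.Ioc 0 m, min ((j : ℝ) / ((s : ℝ) + 1)) u
        = (j : ℝ) / ((s : ℝ) + 1) := by
      intro j hj
      have hjm : j ≤ m := (Finset.mem_Ioc.mp hj).2
      apply min_eq_left
      rw [div_le_iff₀ hs1]
      calc (j : ℝ) ≤ (m : ℝ) := by exact_mod_cast hjm
        _ ≤ ((s : ℝ) + 1) * u := hmu
        _ = u * ((s : ℝ) + 1) := by ring
    rw [Finset.sum_congr rfl hcong,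
      show Finset.Ioc 0 m = Finset.Icc 1 m from (Finset.Icc_add_one_left_eq_Ioc 0 m).symm,
      ← Finset.sum_div, gauss_real, div_div]
  have hB : ∑ j ∈ Finset.Ioc m s, min ((j : ℝ) / ((s : ℝ) + 1)) u
      = ((s : ℝ) - (m : ℝ)) * u := by
    have hcong : ∀ j ∈ Finset.Ioc m s, min ((j : ℝ) / ((s : ℝ) + 1)) u = u := by
      intro j hj
      have hjm : m < j := (Finset.mem_Ioc.mp hj).1
      apply min_eq_right
      rw [le_div_iff₀ hs1]
      calc u * ((s : ℝ) + 1) = ((s : ℝ) + 1) * u := by ring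
        _ ≤ (m : ℝ) + 1 := hum
        _ ≤ (j : ℝ) := by exact_mod_cast hjm
    rw [Finset.sum_congr rfl hcong, Finset.sum_const, Nat.card_Ioc, nsmul_eq_mul,
      Nat.cast_sub hms]
  rw [hA, hB]

private lemma final_ineq (S M N u : ℝ) (hS0 : 0 ≤ S) (hM0 : 0 ≤ M) (hMS : M ≤ S)
    (hu0 : 0 ≤ u) (hmu : M ≤ (S + 1) * u) (hum : (S + 1) * u ≤ M + 1)
    (h : N = M ∨ N = M + 1) :
    1 / (S + 1) * (M * (M + 1) / (2 * (S + 1)) + (S - M) * u)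
      ≤ 1 / (S + 1 + 1) * (N * (N + 1) / (2 * (S + 1 + 1)) + (S + 1 - N) * u) := by
  have hS1 : (0 : ℝ) < S + 1 := by linarith
  have hS2 : (0 : ℝ) < S + 1 + 1 := by linarith
  rw [← sub_nonneg]
  rcases h with rfl | rfl
  · have h1 : (0 : ℝ) ≤ (S + 1) * u - N := by linarith
    have h2 : (0 : ℝ) ≤ 2 * (S + 2) * ((S + 1) * u - N) + N := by
      have := mul_nonneg (show (0 : ℝ) ≤ 2 * (S + 2) by linarith) h1
      linarith
    have hnum : (0 : ℝ) ≤ (N + 1) * (2 * (S + 2) * ((S + 1) * u - N) + N) :=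
      mul_nonneg (by linarith) h2
    have hexp : 1 / (S + 1 + 1) * (N * (N + 1) / (2 * (S + 1 + 1)) + (S + 1 - N) * u)
        - 1 / (S + 1) * (N * (N + 1) / (2 * (S + 1)) + (S - N) * u)
        = ((N + 1) * (2 * (S + 2) * ((S + 1) * u - N) + N))
          / (2 * (S + 1) ^ 2 * (S + 2) ^ 2) := by
      field_simp
      ring
    rw [hexp]
    exact div_nonneg hnum (by positivity)
  · have h1 : (0 : ℝ) ≤ S - M := by linarith
    have h2 : (0 : ℝ) ≤ (M + 1) - (S + 1) * u := by linarith
    have hnum : (0 : ℝ) ≤ (M + 1) * (M + 2)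
        + 2 * (S + 2) * (S - M) * ((M + 1) - (S + 1) * u) := by
      have hp1 := mul_nonneg (mul_nonneg (show (0 : ℝ) ≤ 2 * (S + 2) by linarith) h1) h2
      have hp2 := mul_nonneg (show (0 : ℝ) ≤ M + 1 by linarith)
        (show (0 : ℝ) ≤ M + 2 by linarith)
      linarith
    have hexp : 1 / (S + 1 + 1) * ((M + 1) * (M + 1 + 1) / (2 * (S + 1 + 1)) + (S + 1 - (M + 1)) * u)
        - 1 / (S + 1) * (M * (M + 1) / (2 * (S + 1)) + (S - M) * u)
        = ((M + 1) * (M + 2) + 2 * (S + 2) * (S - M) * ((M + 1) - (S + 1) * u))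
          / (2 * (S + 1) ^ 2 * (S + 2) ^ 2) := by
      field_simp
      ring
    rw [hexp]
    exact div_nonneg hnum (by positivity)

theorem building_block_monotone (u : ℝ) (hu0 : 0 ≤ u) (hu1 : u ≤ 1) (r : ℕ) (hr : 0 < r) :
    (1 / (r : ℝ)) * ∑ j ∈ Finset.Icc 1 (r - 1), min ((j : ℝ) / r) u
      ≤ (1 / ((r : ℝ) + 1)) * ∑ j ∈ Finset.Icc 1 r, min ((j : ℝ) / ((r : ℝ) + 1)) u := by
  obtain ⟨s, rfl⟩ : ∃ s, r = s + 1 := ⟨r - 1, (Nat.succ_pred_eq_of_pos hr).symm⟩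
  simp only [Nat.add_sub_cancel]
  have hcast : ((s + 1 : ℕ) : ℝ) = (s : ℝ) + 1 := by push_cast; ring
  rw [hcast]
  have hS0 : (0 : ℝ) ≤ (s : ℝ) := Nat.cast_nonneg s
  have hx1 : (0 : ℝ) ≤ ((s : ℝ) + 1) * u := by positivity
  have hx2 : (0 : ℝ) ≤ ((s : ℝ) + 1 + 1) * u := by positivity
  have hc1 : ((s : ℝ) + 1) * u ≤ (s : ℝ) + 1 := by
    calc ((s : ℝ) + 1) * u ≤ ((s : ℝ) + 1) * 1 :=
          mul_le_mul_of_nonneg_left hu1 (by positivity)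
      _ = (s : ℝ) + 1 := by ring
  have hc2 : ((s : ℝ) + 1 + 1) * u ≤ ((s + 1 : ℕ) : ℝ) + 1 := by
    rw [hcast]
    calc ((s : ℝ) + 1 + 1) * u ≤ ((s : ℝ) + 1 + 1) * 1 :=
          mul_le_mul_of_nonneg_left hu1 (by positivity)
      _ = (s : ℝ) + 1 + 1 := by ring
  -- floor comparison facts
  have hf1 : ⌊((s : ℝ) + 1) * u⌋ ≤ ⌊((s : ℝ) + 1 + 1) * u⌋ :=
    Int.floor_le_floor (by nlinarith)
  have hf2 : ⌊((s : ℝ) + 1 + 1) * u⌋ ≤ ⌊((s : ℝ) + 1) * u⌋ + 1 := by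
    have h1 : ⌊((s : ℝ) + 1 + 1) * u⌋ ≤ ⌊((s : ℝ) + 1) * u + 1⌋ :=
      Int.floor_le_floor (by nlinarith)
    have h2 : ⌊((s : ℝ) + 1) * u + 1⌋ = ⌊((s : ℝ) + 1) * u⌋ + 1 := by
      rw [show (1 : ℝ) = ((1 : ℤ) : ℝ) from by norm_num, Int.floor_add_intCast]
    omega
  have hf3 : (0 : ℤ) ≤ ⌊((s : ℝ) + 1) * u⌋ := Int.floor_nonneg.mpr hx1
  obtain ⟨m, hm⟩ : ∃ m : ℕ, m = min ⌊((s : ℝ) + 1) * u⌋.toNat s := ⟨_, rfl⟩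
  obtain ⟨n, hn⟩ : ∃ n : ℕ, n = min ⌊((s : ℝ) + 1 + 1) * u⌋.toNat (s + 1) := ⟨_, rfl⟩
  have hnm : n = m ∨ n = m + 1 := by rw [hm, hn]; omega
  have hms : m ≤ s := by rw [hm]; exact min_le_right _ _
  have hns : n ≤ s + 1 := by rw [hn]; exact min_le_right _ _
  have hmu : (m : ℝ) ≤ ((s : ℝ) + 1) * u := by
    rw [hm]; exact (cap_facts (((s : ℝ) + 1) * u) hx1 s hc1).1
  have hum : ((s : ℝ) + 1) * u ≤ (m : ℝ) + 1 := by
    rw [hm]; exact (cap_facts (((s : ℝ) + 1) * u) hx1 s hc1).2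
  have hnu : (n : ℝ) ≤ ((s : ℝ) + 1 + 1) * u := by
    rw [hn]; exact (cap_facts (((s : ℝ) + 1 + 1) * u) hx2 (s + 1) hc2).1
  have hun : ((s : ℝ) + 1 + 1) * u ≤ (n : ℝ) + 1 := by
    rw [hn]; exact (cap_facts (((s : ℝ) + 1 + 1) * u) hx2 (s + 1) hc2).2
  -- rewrite the two sums with explicit formulas
  rw [sum_min_formula u s m hms hmu hum]
  have hform2 := sum_min_formula u (s + 1) n hns (by rw [hcast]; exact hnu)
    (by rw [hcast]; exact hun)
  rw [hcast] at hform2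
  rw [hform2]
  -- final arithmetic
  have hMS : (m : ℝ) ≤ (s : ℝ) := by exact_mod_cast hms
  have hNM : (n : ℝ) = (m : ℝ) ∨ (n : ℝ) = (m : ℝ) + 1 := by
    rcases hnm with h | h
    · left; exact_mod_cast h
    · right; rw [h]; push_cast; ring
  exact final_ineq (s : ℝ) (m : ℝ) (n : ℝ) u hS0 (Nat.cast_nonneg m) hMS hu0 hmu hum hNM
end

section
/- Fix a real number t > 1 and define G_t(z) = log((1 − e^{−2tz})/(1 − e^{−2z})) for z > 0. Then G_t(z) > 0 for all z > 0, and G_t is strictly decreasing on (0,∞). -/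
/-!
Substituting `x = e^{-2z}`, which decreases from `1` to `0` as `z` runs over `(0, ∞)`, turns
`G_t(z)` into the logarithm of `(1 - x^t) / (1 - x)`, the slope of the secant of the strictly
convex function `u ↦ u^t` between `x` and `1`. Secant slopes of a strictly convex function
increase strictly with `x`, and at `x = 0` this one equals `1`.
-/

open Real Set

noncomputable def rpowSecant (t x : ℝ) : ℝ := (1 - x ^ t) / (1 - x)

lemma rpowSecant_strictMonoOn {t : ℝ} (ht : 1 < t) : StrictMonoOn (rpowSecant t) (Ico 0 1) := by
  intro x hx y hy hxy
  have h := (strictConvexOn_rpow ht).secant_strict_mono (a := 1) (mem_Ici.2 zero_le_one)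
    (mem_Ici.2 hx.1) (mem_Ici.2 hy.1) hx.2.ne hy.2.ne hxy
  simpa only [rpowSecant, one_rpow, ← neg_div_neg_eq (_ - (1 : ℝ)), neg_sub] using h

lemma rpowSecant_zero {t : ℝ} (ht : 0 < t) : rpowSecant t 0 = 1 := by
  simp [rpowSecant, zero_rpow ht.ne']

lemma one_lt_rpowSecant {t x : ℝ} (ht : 1 < t) (hx₀ : 0 < x) (hx₁ : x < 1) :
    1 < rpowSecant t x :=
  rpowSecant_zero (zero_lt_one.trans ht) ▸
    rpowSecant_strictMonoOn ht ⟨le_rfl, zero_lt_one⟩ ⟨hx₀.le, hx₁⟩ hx₀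

lemma rpowSecant_exp (t y : ℝ) : rpowSecant t (exp y) = (1 - exp (y * t)) / (1 - exp y) := by
  rw [rpowSecant, exp_mul]

lemma exp_neg_two_mul_mem_Ioo {z : ℝ} (hz : 0 < z) : exp (-2 * z) ∈ Ioo 0 1 :=
  ⟨exp_pos _, exp_lt_one_iff.2 (by linarith)⟩

theorem Gt_pos_and_strictAnti (t : ℝ) (ht : 1 < t) :
    (∀ z : ℝ, 0 < z →
      0 < Real.log ((1 - Real.exp (-2 * t * z)) / (1 - Real.exp (-2 * z)))) ∧
    StrictAntiOn
      (fun z : ℝ => Real.log ((1 - Real.exp (-2 * t * z)) / (1 - Real.exp (-2 * z))))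
      (Set.Ioi 0) := by
  have hG : ∀ z : ℝ, (1 - exp (-2 * t * z)) / (1 - exp (-2 * z)) = rpowSecant t (exp (-2 * z)) :=
    fun z ↦ by rw [rpowSecant_exp, mul_right_comm]
  simp only [hG]
  refine ⟨fun z hz ↦ ?_, fun a ha b hb hab ↦ ?_⟩
  · obtain ⟨hx₀, hx₁⟩ := exp_neg_two_mul_mem_Ioo hz
    exact log_pos (one_lt_rpowSecant ht hx₀ hx₁)
  · obtain ⟨hb₀, hb₁⟩ := exp_neg_two_mul_mem_Ioo (mem_Ioi.1 hb)
    refine log_lt_log (zero_lt_one.trans (one_lt_rpowSecant ht hb₀ hb₁)) ?_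
    exact rpowSecant_strictMonoOn ht ⟨hb₀.le, hb₁⟩
      (Ioo_subset_Ico_self (exp_neg_two_mul_mem_Ioo (mem_Ioi.1 ha))) (exp_lt_exp.2 (by linarith))
end

section
/- Let F : (0,1] → ℝ be positive and nonincreasing, and let A ≤ b be positive integers. Then ∑_{j=1}^{A-1} F(j/A) ≤ ∑_{k=1}^{b-1} F(k/b). -/
open Real Finset

theorem matching_principle (F : ℝ → ℝ)
    (hpos : ∀ x ∈ Set.Ioc (0 : ℝ) 1, 0 < F x)
    (hmono : ∀ x y : ℝ, 0 < x → x ≤ y → y ≤ 1 → F y ≤ F x)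
    (A b : ℕ) (hA : 0 < A) (hAb : A ≤ b) :
    ∑ j ∈ Finset.Icc 1 (A - 1), F ((j : ℝ) / A)
      ≤ ∑ k ∈ Finset.Icc 1 (b - 1), F ((k : ℝ) / b) := by
  have hb : 0 < b := hA.trans_le hAb
  set φ : ℕ → ℕ := fun j => j * b / A with hφ
  -- key: strict mono of φ on relevant range
  have hmonoφ : ∀ j j' : ℕ, j < j' → φ j < φ j' := by
    intro j j' hjj
    have h1 : j * b + A ≤ j' * b := by
      have : (j + 1) * b ≤ j' * b := Nat.mul_le_mul_right b hjj
      nlinarith [Nat.one_le_iff_ne_zero.mpr hb.ne']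
    calc φ j < (j * b + A) / A := by
          simp [hφ, Nat.add_div_right _ hA]
      _ ≤ φ j' := Nat.div_le_div_right h1
  have hφmem : ∀ j ∈ Finset.Icc 1 (A - 1), φ j ∈ Finset.Icc 1 (b - 1) := by
    intro j hj
    simp only [Finset.mem_Icc] at hj ⊢
    obtain ⟨hj1, hj2⟩ := hj
    constructor
    · have : A ≤ j * b := le_trans hAb (Nat.le_mul_of_pos_left b hj1)
      exact Nat.one_le_div_iff hA |>.mpr this
    · have hj2' : j * b ≤ (A - 1) * b := Nat.mul_le_mul_right b hj2
      have : (A - 1) * b / A ≤ b - 1 := by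
        rcases Nat.eq_or_lt_of_le hA with h | h
        · simp [← h]
        · have h2 : (A - 1) * b = A * b - b := by rw [Nat.sub_mul, Nat.one_mul]
          calc (A - 1) * b / A = (A * b - b) / A := by rw [h2]
            _ ≤ (A * b - A) / A := Nat.div_le_div_right (Nat.sub_le_sub_left hAb _)
            _ = (A * (b - 1)) / A := by rw [Nat.mul_sub, Nat.mul_one]
            _ = b - 1 := Nat.mul_div_cancel_left _ hA
      exact le_trans (Nat.div_le_div_right hj2') this
  calc ∑ j ∈ Finset.Icc 1 (A - 1), F ((j : ℝ) / A)
      ≤ ∑ j ∈ Finset.Icc 1 (A - 1), F ((φ j : ℝ) / b) := by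
        apply Finset.sum_le_sum
        intro j hj
        simp only [Finset.mem_Icc] at hj
        obtain ⟨hj1, hj2⟩ := hj
        have hjA : j < A := lt_of_le_of_lt hj2 (Nat.sub_lt hA one_pos)
        have hφpos : 1 ≤ φ j := by
          have := hφmem j (Finset.mem_Icc.mpr ⟨hj1, hj2⟩)
          exact (Finset.mem_Icc.mp this).1
        apply hmono
        · positivity
        · rw [div_le_div_iff₀ (by positivity) (by positivity)]
          have : (φ j : ℝ) * A ≤ j * b := by
            have h := Nat.div_mul_le_self (j * b) A
            calc (φ j : ℝ) * A = ((φ j * A : ℕ) : ℝ) := by push_cast; ring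
              _ ≤ ((j * b : ℕ) : ℝ) := by exact_mod_cast h
              _ = (j : ℝ) * b := by push_cast; ring
          linarith
        · rw [div_le_one (by positivity)]
          exact_mod_cast hjA.le
    _ = ∑ k ∈ (Finset.Icc 1 (A - 1)).image φ, F ((k : ℝ) / b) := by
        rw [Finset.sum_image]
        intro x _ y _ hxy
        by_contra h
        rcases Nat.lt_or_ge x y with h' | h'
        · exact absurd hxy (hmonoφ x y h').ne
        · exact absurd hxy.symm (hmonoφ y x (lt_of_le_of_ne h' (Ne.symm h))).ne
    _ ≤ ∑ k ∈ Finset.Icc 1 (b - 1), F ((k : ℝ) / b) := by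
        apply Finset.sum_le_sum_of_subset_of_nonneg
        · intro k hk
          obtain ⟨j, hj, rfl⟩ := Finset.mem_image.mp hk
          exact hφmem j hj
        · intro k hk _
          simp only [Finset.mem_Icc] at hk
          have hk1 : 1 ≤ k := hk.1
          have hkb : k ≤ b - 1 := hk.2
          have : k < b := lt_of_le_of_lt hkb (Nat.sub_lt hb one_pos)
          refine (hpos _ ⟨by positivity, ?_⟩).le
          rw [div_le_one (by positivity)]
          exact_mod_cast this.le
end

section
/- Let n ≥ 1 be an integer and let S ⊂ ℤ² be a finite set with |S| = n² such that the subgraph of the square-lattice graph ℒ induced on S is connected. Then the number of edges of this induced subgraph is at most 2n(n−1); consequently its cycle rank E − n² + 1 is at most (n−1)². -/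
/-!
Every edge of the induced graph is `{p, p + (1, 0)}` or `{p, p + (0, 1)}` with both ends in `S`.
In each row of `S` the rightmost point has no horizontal edge to its right, so there are at most
`|S| - #rows` horizontal edges, and likewise at most `|S| - #columns` vertical ones. Since `S` lies
in the product of its rows and columns, `#rows * #columns ≥ n²`, hence `#rows + #columns ≥ 2n`
by AM-GM, and the number of edges is at most `2n² - 2n`.
-/

/-- The square-lattice graph on `ℤ²`: `u` and `v` are adjacent iff
`|u₁ - v₁| + |u₂ - v₂| = 1`. -/
def latticeGraph : SimpleGraph (ℤ × ℤ) where
  Adj u v := |u.1 - v.1| + |u.2 - v.2| = 1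
  symm := by
    constructor
    intro u v h
    rw [abs_sub_comm v.1, abs_sub_comm v.2]
    exact h
  loopless := by
    constructor
    intro u h
    simp at h

open Finset

theorem SimpleGraph.ncard_edgeSet_induce {V : Type*} (G : SimpleGraph V) (s : Set V) :
    (G.induce s).edgeSet.ncard = (G.edgeSet ∩ s.sym2).ncard := by
  rw [← Set.ncard_image_of_injective _ (Sym2.map.injective Subtype.val_injective)]
  congr 1
  ext e
  induction e with
  | _ u v =>
    simp only [Set.mem_image, Sym2.exists, mem_edgeSet, comap_adj,
      Function.Embedding.subtype_apply, Sym2.map_mk, Sym2.eq, Sym2.rel_iff', Prod.mk.injEq,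
      Prod.swap_prod_mk, Subtype.exists, exists_and_left, exists_prop, Set.mem_inter_iff,
      Set.mk_mem_sym2_iff]
    grind [G.adj_comm]

/-- In each fiber of `π`, the point maximising `f` has its successor outside `s`. -/
theorem Finset.card_filter_apply_mem_add_card_image_le {α β γ : Type*} [DecidableEq β]
    [LinearOrder γ] (s : Finset α) (next : α → α) [DecidablePred (next · ∈ s)] (π : α → β)
    (f : α → γ) (hπ : ∀ p, π (next p) = π p) (hf : ∀ p, f p < f (next p)) :
    #{p ∈ s | next p ∈ s} + #(s.image π) ≤ #s := by
  have hlast : s.image π ⊆ {p ∈ s | next p ∉ s}.image π := by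
    intro b hb
    obtain ⟨q, hq, rfl⟩ := mem_image.mp hb
    obtain ⟨m, hm, hmax⟩ := exists_max_image {p ∈ s | π p = π q} f ⟨q, by simp [hq]⟩
    rw [mem_filter] at hm
    refine mem_image.mpr ⟨m, mem_filter.mpr ⟨hm.1, fun hnext => ?_⟩, hm.2⟩
    exact (hf m).not_ge (hmax _ (mem_filter.mpr ⟨hnext, (hπ m).trans hm.2⟩))
  calc #{p ∈ s | next p ∈ s} + #(s.image π)
      ≤ #{p ∈ s | next p ∈ s} + #{p ∈ s | next p ∉ s} := by grw [hlast, card_image_le]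
    _ = #s := card_filter_add_card_filter_not _

theorem Nat.two_mul_le_add_of_sq_le_mul {n a b : ℕ} (h : n ^ 2 ≤ a * b) : 2 * n ≤ a + b := by
  nlinarith [sq_nonneg ((a : ℤ) - b)]

theorem latticeGraph_adj_iff {u v : ℤ × ℤ} :
    latticeGraph.Adj u v ↔
      v = u + (1, 0) ∨ u = v + (1, 0) ∨ v = u + (0, 1) ∨ u = v + (0, 1) := by
  change |u.1 - v.1| + |u.2 - v.2| = 1 ↔ _
  simp only [Prod.ext_iff, Prod.fst_add, Prod.snd_add, Int.abs_eq_natAbs]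
  omega

theorem ncard_edgeSet_induce_latticeGraph_le (s : Finset (ℤ × ℤ)) :
    (latticeGraph.induce (s : Set (ℤ × ℤ))).edgeSet.ncard ≤
      #{p ∈ s | p + (1, 0) ∈ s} + #{p ∈ s | p + (0, 1) ∈ s} := by
  let horizontal := {p ∈ s | p + (1, 0) ∈ s}.image fun p => s(p, p + (1, 0))
  let vertical := {p ∈ s | p + (0, 1) ∈ s}.image fun p => s(p, p + (0, 1))
  have hsub : latticeGraph.edgeSet ∩ (s : Set (ℤ × ℤ)).sym2 ⊆ ↑(horizontal ∪ vertical) := by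
    rintro e ⟨he, hes⟩
    induction e with | _ u v => ?_
    rw [Set.mk_mem_sym2_iff, mem_coe, mem_coe] at hes
    rw [SimpleGraph.mem_edgeSet, latticeGraph_adj_iff] at he
    simp only [horizontal, vertical, coe_union, coe_image, coe_filter, Set.mem_union,
      Set.mem_image, Set.mem_ofPred_eq]
    rcases he with rfl | rfl | rfl | rfl
    · exact Or.inl ⟨u, hes, rfl⟩
    · exact Or.inl ⟨v, hes.symm, Sym2.eq_swap⟩
    · exact Or.inr ⟨u, hes, rfl⟩
    · exact Or.inr ⟨v, hes.symm, Sym2.eq_swap⟩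
  calc _ = (latticeGraph.edgeSet ∩ (s : Set (ℤ × ℤ)).sym2).ncard :=
        latticeGraph.ncard_edgeSet_induce _
    _ ≤ #(horizontal ∪ vertical) := by
        grw [hsub, Set.ncard_coe_finset]
        exact finite_toSet _
    _ ≤ _ := by grw [card_union_le, card_image_le, card_image_le]

theorem ncard_edgeSet_induce_latticeGraph_add_card_image_add_card_image_le
    (s : Finset (ℤ × ℤ)) :
    (latticeGraph.induce (s : Set (ℤ × ℤ))).edgeSet.ncard + #(s.image Prod.fst) +
      #(s.image Prod.snd) ≤ 2 * #s := by
  have hedges := ncard_edgeSet_induce_latticeGraph_le s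
  have hrows := s.card_filter_apply_mem_add_card_image_le (· + (1, 0)) Prod.snd Prod.fst
    (fun _ => by simp) (fun _ => by simp)
  have hcols := s.card_filter_apply_mem_add_card_image_le (· + (0, 1)) Prod.fst Prod.snd
    (fun _ => by simp) (fun _ => by simp)
  omega

theorem induced_grid_edge_bound_general (n : ℕ) (S : Set (ℤ × ℤ))
    (hfin : S.Finite) (hcard : S.ncard = n ^ 2) :
    (latticeGraph.induce S).edgeSet.ncard ≤ 2 * n * (n - 1) ∧
    ((latticeGraph.induce S).edgeSet.ncard : ℤ) - (n : ℤ) ^ 2 + 1 ≤ ((n : ℤ) - 1) ^ 2 := by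
  lift S to Finset (ℤ × ℤ) using hfin
  rw [Set.ncard_coe_finset] at hcard
  have hgrid : n ^ 2 ≤ #(S.image Prod.fst) * #(S.image Prod.snd) := by
    rw [← hcard, ← card_product]
    exact card_le_card subset_product
  have hsum := Nat.two_mul_le_add_of_sq_le_mul hgrid
  have hbound := ncard_edgeSet_induce_latticeGraph_add_card_image_add_card_image_le S
  generalize (latticeGraph.induce (S : Set (ℤ × ℤ))).edgeSet.ncard = E at hbound ⊢
  constructor
  · rw [Nat.mul_sub_one, mul_assoc, ← sq]
    omega
  · have hE : (E : ℤ) + 2 * n ≤ 2 * n ^ 2 := by exact_mod_cast (by omega : E + 2 * n ≤ 2 * n ^ 2)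
    nlinarith

theorem induced_grid_edge_bound (n : ℕ) (hn : 1 ≤ n) (S : Set (ℤ × ℤ))
    (hfin : S.Finite) (hcard : S.ncard = n ^ 2)
    (hconn : (latticeGraph.induce S).Connected) :
    (latticeGraph.induce S).edgeSet.ncard ≤ 2 * n * (n - 1) ∧
    ((latticeGraph.induce S).edgeSet.ncard : ℤ) - (n : ℤ) ^ 2 + 1 ≤ ((n : ℤ) - 1) ^ 2 :=
  induced_grid_edge_bound_general n S hfin hcard
end
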